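/- Let G = ⟨S|R⟩ be the group given by the Section-4 construction. Then every geodesic ray γ in G whose intersection function ρ_γ is sublinear has bounded intersection function. Equivalently, for every geodesic ray γ, either ρ_γ is bounded or ρ_γ is not sublinear. (This is the paper's Proposition 4.7: every Morse geodesic ray in Cay(G,S) is strongly contracting, Theorem A(2).) -/

import Mathlib

namespace SmallCancel

/-- A word over `S`: a finite sequence of letters from the symmetrized alphabet
`S ∪ S⁻¹`, encoded as pairs `(s, b)` where `b = true` denotes the letter `s`
and `b = false` denotes its formal inverse `s⁻¹`. -/
abbrev Word (S : Type) := List (S × Bool)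

/-- The formal inverse of a word. -/
def wInv {S : Type} (w : Word S) : Word S := (w.map fun a => (a.1, !a.2)).reverse

/-- A word is reduced if no letter is immediately followed by its inverse. -/
def Reduced {S : Type} (w : Word S) : Prop := w.Chain' fun a b => b ≠ (a.1, !a.2)

/-- A word is cyclically reduced if all of its cyclic shifts are reduced. -/
def CyclicallyReduced {S : Type} (w : Word S) : Prop := ∀ n, Reduced (w.rotate n)

/-- `R̄`: the set of all cyclic shifts of elements of `R` and of their inverses. -/
def cyclicClosure {S : Type} (R : Set (Word S)) : Set (Word S) :=
  {w | ∃ r ∈ R, ∃ n, w = r.rotate n ∨ w = (wInv r).rotate n}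

/-- `p` is a piece with respect to `R` if it is a prefix of two distinct elements
of `R̄`. -/
def IsPiece {S : Type} (R : Set (Word S)) (p : Word S) : Prop :=
  ∃ r₁ ∈ cyclicClosure R, ∃ r₂ ∈ cyclicClosure R, r₁ ≠ r₂ ∧ p <+: r₁ ∧ p <+: r₂

/-- The `C'(λ)` small-cancellation condition: every piece `p` that is a subword of
some `r ∈ R̄` satisfies `|p| < λ|r|`. -/
def SmallCancellation {S : Type} (R : Set (Word S)) (lam : ℝ) : Prop :=
  ∀ p, IsPiece R p → ∀ r ∈ cyclicClosure R, p <:+: r →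
    (p.length : ℝ) < lam * r.length

/-- The element of the presented group `⟨S | R⟩` represented by a word `w`. -/
def toPresented {S : Type} (R : Set (Word S)) (w : Word S) :
    PresentedGroup {g : FreeGroup S | ∃ r ∈ R, g = FreeGroup.mk r} :=
  QuotientGroup.mk (FreeGroup.mk w)

/-- A word `w` is geodesic if every word representing the same element of the
presented group `⟨S | R⟩` is at least as long as `w`. -/
def IsGeodesicWord {S : Type} (R : Set (Word S)) (w : Word S) : Prop :=
  ∀ v : Word S, toPresented R v = toPresented R w → w.length ≤ v.length

/-- The finite prefix of length `n` of an infinite word `γ`. -/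
def rayPrefix {S : Type} (γ : ℕ → S × Bool) (n : ℕ) : Word S := (List.range n).map γ

/-- A geodesic ray: an infinite word all of whose finite prefixes are geodesic. -/
def IsGeodesicRay {S : Type} (R : Set (Word S)) (γ : ℕ → S × Bool) : Prop :=
  ∀ n, IsGeodesicWord R (rayPrefix γ n)

/-- The intersection function of a ray `γ`:
`ρ_γ(t) = max{|w| : w is a subword of some r ∈ R̄ with |r| ≤ t and a subword of γ}`. -/
noncomputable def intersectionFn {S : Type} (R : Set (Word S)) (γ : ℕ → S × Bool)
    (t : ℕ) : ℕ :=
  sSup {n | ∃ w : Word S, (∃ r ∈ cyclicClosure R, r.length ≤ t ∧ w <:+: r) ∧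
    (∃ m, w <:+: rayPrefix γ m) ∧ w.length = n}

/-- A function is sublinear if `ρ(n)/n → 0`. -/
def Sublinear (ρ : ℕ → ℝ) : Prop :=
  Filter.Tendsto (fun n => ρ n / n) Filter.atTop (nhds 0)

/-- A weakly increasing function `f : ℕ → ℝ` is viable if `f(n) ≥ 6` for all `n`
and `f(n) → ∞`. -/
def Viable (f : ℕ → ℝ) : Prop :=
  Monotone f ∧ (∀ n, 6 ≤ f n) ∧ Filter.Tendsto f Filter.atTop Filter.atTop

/-- The `C'(1/f)` small-cancellation condition for a set of relators: every piece `p`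
that is a subword of some `r ∈ R̄` satisfies `|p| < |r|/f(|r|)`. -/
def CPrimeOverF {S : Type} (R : Set (Word S)) (f : ℕ → ℝ) : Prop :=
  ∀ p, IsPiece R p → ∀ r ∈ cyclicClosure R, p <:+: r →
    (p.length : ℝ) < (r.length : ℝ) / f r.length

/-- The pair `(x, R)` satisfies the `C'(1/f)` condition: every word `p` that is a
subword both of `x` and of some `r ∈ R̄` satisfies `|p| < |r|/f(|r|)`. -/
def PairCPrimeOverF {S : Type} (x : Word S) (R : Set (Word S)) (f : ℕ → ℝ) : Prop :=
  ∀ p, p <:+: x → ∀ r ∈ cyclicClosure R, p <:+: r →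
    (p.length : ℝ) < (r.length : ℝ) / f r.length

/-- The increasing partial small-cancellation condition (IPSC). -/
def IPSC {S : Type} (R : Set (Word S)) : Prop :=
  ∀ n : ℕ → ℕ, (∀ i, 0 < n i) → ∃ f : ℕ → ℝ, Viable f ∧
    ∀ K : ℕ, ∃ i, K ≤ i ∧ ∃ x y : Word S, x ++ y ∈ cyclicClosure R ∧
      n i ≤ (x ++ y).length ∧ ((x ++ y).length : ℝ) / i ≤ x.length ∧
      PairCPrimeOverF x R f

end SmallCancel

namespace SmallCancel

/-- A word `w` of length `n` (with letters in `S`) is non-periodic if the `2n` words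
obtained as cyclic shifts of `w` and of `w⁻¹` are pairwise distinct. -/
def NonPeriodic {S : Type} (w : Word S) : Prop :=
  Function.Injective fun p : Fin w.length × Bool =>
    if p.2 then w.rotate p.1 else (wInv w).rotate p.1

/-- The data of the Section-4 construction: an integer `N ≥ 28`, a positive multiple
`L` of `N`, and three distinct non-periodic positive words `r_1¹, r_2¹, r_3¹` of
length `L` over `S` (indexed by `ZMod 3`, with the paper's index `i ∈ {1,2,3}` taken
modulo 3) satisfying the `C'(1/(4N))` small-cancellation condition, each given as the
concatenation of `N` blocks `y_(i,l)¹` of length `L/N`. -/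
structure Section4Data (S : Type) where
  /-- the parameter `N ≥ 28` -/
  N : ℕ
  hN : 28 ≤ N
  /-- the length `L`, a positive multiple of `N` -/
  L : ℕ
  hdvd : N ∣ L
  hLpos : 0 < L
  /-- the blocks `y_(i,l)¹`, so that `r_i¹ = y_(i,1)¹ ⋯ y_(i,N)¹` -/
  y1 : ZMod 3 → Fin N → Word S
  hlen : ∀ i l, (y1 i l).length = L / N
  /-- the level-1 relators use only letters of `S` (no inverse letters) -/
  hletters : ∀ i l, ∀ a ∈ y1 i l, a.2 = true
  /-- the three level-1 relators are pairwise distinct -/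
  hdistinct : Function.Injective fun i : ZMod 3 => (List.ofFn fun l => y1 i l).flatten
  /-- the three level-1 relators are non-periodic -/
  hnonper : ∀ i : ZMod 3, NonPeriodic ((List.ofFn fun l => y1 i l).flatten)
  /-- the level-1 relators satisfy the `C'(1/(4N))` condition -/
  hsc : SmallCancellation
    {w | ∃ i : ZMod 3, w = (List.ofFn fun l => y1 i l).flatten} (1 / (4 * N))

namespace Section4Data

variable {S : Type}

/-- The words `y_(i,l)^k` of the Section-4 construction, defined for levels `k ≥ 1`
by `y_(i,l)^{k+1} = ∏_{j=1}^{N} (y_(i,j)^k · y_(i+1,l)^k)` (the value at `k = 0` is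
irrelevant and set to `y1`). -/
def y (D : Section4Data S) : ℕ → ZMod 3 → Fin D.N → Word S
  | 0 => D.y1
  | 1 => D.y1
  | (k + 2) => fun i l =>
      (List.ofFn fun j : Fin D.N => D.y (k + 1) i j ++ D.y (k + 1) (i + 1) l).flatten

/-- The relators `r_i^k = ∏_{j=1}^{N} y_(i,j)^k` (for `k = 1` this agrees with the
given level-1 relators). -/
def r (D : Section4Data S) (k : ℕ) (i : ZMod 3) : Word S :=
  (List.ofFn fun j : Fin D.N => D.y k i j).flatten

/-- The set of relators `R = {r_i^k : 1 ≤ i ≤ 3, k ≥ 1}` of the Section-4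
construction. -/
def R (D : Section4Data S) : Set (Word S) :=
  {w | ∃ k, 1 ≤ k ∧ ∃ i : ZMod 3, w = D.r k i}

end Section4Data

end SmallCancel

open SmallCancel Section4Data

/-!
Level-`k` relators of the construction are cyclic concatenations of level-`K` blocks `y_(i,l)^K`
(and, for inverse relators, of their inverses) for every `1 ≤ K ≤ k`, and all level-`K` blocks
have the same length `b_K`, which grows geometrically in `K`. If a ray contains a level-`K` block,
then `ρ(N b_K) ≥ b_K`; so a ray with sublinear `ρ` misses every level-`K` block for some `K`. A
subword of length `2 b_K` of a concatenation of level-`K` blocks contains a whole block, so such a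
ray shares fewer than `2 b_K` letters with every relator of level above `K`, while it trivially
shares at most `N b_K` letters with the finitely many relators of level at most `K`.
-/

open scoped Computability

theorem List.rotate_infix_append_self {α : Type*} (l : List α) (n : ℕ) :
    l.rotate n <:+: l ++ l := by
  rw [List.rotate_eq_drop_append_take_mod]
  refine ⟨l.take (n % l.length), l.drop (n % l.length), ?_⟩
  simp only [← List.append_assoc, List.take_append_drop]
  simp only [List.append_assoc, List.take_append_drop]

namespace Language

variable {α : Type*}

theorem append_mem_kstar {l : Language α} {a b : List α} (ha : a ∈ l∗) (hb : b ∈ l∗) :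
    a ++ b ∈ l∗ :=
  kstar_mul_kstar l ▸ append_mem_mul ha hb

theorem flatten_mem_kstar {l : Language α} {L : List (List α)} (hL : ∀ x ∈ L, x ∈ l∗) :
    L.flatten ∈ l∗ :=
  kstar_idem l ▸ join_mem_kstar hL

theorem exists_mem_infix_of_infix_mem_kstar {l : Language α} {B : ℕ} (hB : 0 < B)
    (hl : ∀ c ∈ l, c.length ≤ B) {x w : List α} (hx : x ∈ l∗) (hwx : w <:+: x)
    (hw : 2 * B ≤ w.length) : ∃ c ∈ l, c <:+: w := by
  obtain ⟨L, rfl, hL⟩ := mem_kstar.1 hx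
  clear hx
  induction L with
  | nil => simp_all
  | cons c L ih =>
    rw [List.flatten_cons, List.infix_append_iff] at hwx
    rcases hwx with hwc | hwL | ⟨w₁, w₂, rfl, hw₁, hw₂⟩
    · have := hl c (hL c List.mem_cons_self)
      have := hwc.length_le
      omega
    · exact ih (fun y hy => hL y (List.mem_cons_of_mem c hy)) hwL
    · have hw₁c : w₁.length ≤ B := hw₁.length_le.trans (hl c (hL c List.mem_cons_self))
      rw [List.length_append] at hw
      cases L with
      | nil =>
        rw [List.flatten_nil, List.prefix_nil] at hw₂
        subst hw₂
        simp only [List.length_nil] at hw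
        omega
      | cons c₂ L =>
        have hc₂ : c₂ ∈ l := hL c₂ (by simp)
        have hc₂w₂ : c₂ <+: w₂ :=
          List.prefix_of_prefix_length_le (List.prefix_append c₂ L.flatten) hw₂
            (by have := hl c₂ hc₂; omega)
        exact ⟨c₂, hc₂, hc₂w₂.isInfix.trans List.infix_append_right⟩

end Language

namespace SmallCancel

variable {S : Type}

@[simp]
theorem length_wInv (w : Word S) : (wInv w).length = w.length := by
  simp [wInv]

@[simp]
theorem wInv_wInv (w : Word S) : wInv (wInv w) = w := by
  simp [wInv, Function.comp_def]

theorem wInv_infix {a b : Word S} (h : a <:+: b) : wInv a <:+: wInv b := by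
  obtain ⟨u, v, rfl⟩ := h
  exact ⟨wInv v, wInv u, by simp [wInv]⟩

theorem wInv_flatten (L : List (Word S)) : wInv L.flatten = (L.map wInv).reverse.flatten := by
  simp only [wInv, List.map_flatten, List.reverse_flatten, List.map_map]
  rfl

theorem wInv_mem_kstar {l : Language (S × Bool)} (hl : ∀ c ∈ l, wInv c ∈ l) {x : Word S}
    (hx : x ∈ l∗) : wInv x ∈ l∗ := by
  obtain ⟨L, rfl, hL⟩ := Language.mem_kstar.1 hx
  rw [wInv_flatten]
  exact Language.join_mem_kstar (by simpa using fun c hc => hl c (hL c hc))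

/-- Cyclic shifts of `r₀` and of its inverse are subwords of `r₀ r₀` and of `r₀⁻¹ r₀⁻¹`. -/
theorem exists_infix_mem_kstar_of_rotate {l : Language (S × Bool)} (hl : ∀ c ∈ l, wInv c ∈ l)
    {r₀ r : Word S} (hr₀ : r₀ ∈ l∗) {n : ℕ} (hr : r = r₀.rotate n ∨ r = (wInv r₀).rotate n) :
    ∃ x ∈ l∗, r <:+: x := by
  rcases hr with rfl | rfl
  · exact ⟨_, Language.append_mem_kstar hr₀ hr₀, List.rotate_infix_append_self _ _⟩
  · have := wInv_mem_kstar hl hr₀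
    exact ⟨_, Language.append_mem_kstar this this, List.rotate_infix_append_self _ _⟩

def IsRaySubword (γ : ℕ → S × Bool) (w : Word S) : Prop :=
  ∃ m, w <:+: rayPrefix γ m

theorem IsRaySubword.of_infix {γ : ℕ → S × Bool} {v w : Word S} (hw : IsRaySubword γ w)
    (hvw : v <:+: w) : IsRaySubword γ v :=
  let ⟨m, hm⟩ := hw
  ⟨m, hvw.trans hm⟩

theorem le_intersectionFn {R : Set (Word S)} {γ : ℕ → S × Bool} {t : ℕ} {r w : Word S}
    (hr : r ∈ cyclicClosure R) (hrt : r.length ≤ t) (hwr : w <:+: r)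
    (hwγ : IsRaySubword γ w) : w.length ≤ intersectionFn R γ t := by
  refine le_csSup ⟨t, ?_⟩ ⟨w, ⟨r, hr, hrt, hwr⟩, hwγ, rfl⟩
  rintro _ ⟨v, ⟨r', -, hr't, hvr'⟩, -, rfl⟩
  exact hvr'.length_le.trans hr't

theorem intersectionFn_le {R : Set (Word S)} {γ : ℕ → S × Bool} {t C : ℕ}
    (h : ∀ r ∈ cyclicClosure R, r.length ≤ t → ∀ w, w <:+: r → IsRaySubword γ w →
      w.length ≤ C) :
    intersectionFn R γ t ≤ C := by
  refine csSup_le' ?_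
  rintro _ ⟨w, ⟨r, hr, hrt, hwr⟩, hwγ, rfl⟩
  exact h r hr hrt w hwr hwγ

theorem Sublinear.eventually_lt_mul {ρ : ℕ → ℝ} (hρ : Sublinear ρ) {t : ℕ → ℕ}
    (ht : Filter.Tendsto t Filter.atTop Filter.atTop) {ε : ℝ} (hε : 0 < ε) :
    ∀ᶠ k in Filter.atTop, ρ (t k) < ε * t k := by
  filter_upwards [(hρ.comp ht).eventually (gt_mem_nhds hε), ht.eventually_gt_atTop 0]
    with k hk htk
  rwa [Function.comp_apply, div_lt_iff₀ (by exact_mod_cast htk)] at hk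

namespace Section4Data

variable (D : Section4Data S)

theorem N_pos : 0 < D.N := by
  have := D.hN
  omega

/-- The common length `b_k = (L/N)(2N)^(k-1)` of the level-`k` blocks. -/
def blockLength (k : ℕ) : ℕ := D.L / D.N * (2 * D.N) ^ (k - 1)

theorem L_div_N_pos : 0 < D.L / D.N :=
  Nat.div_pos (Nat.le_of_dvd D.hLpos D.hdvd) D.N_pos

theorem blockLength_pos (k : ℕ) : 0 < D.blockLength k :=
  Nat.mul_pos D.L_div_N_pos (Nat.pow_pos (by have := D.N_pos; omega))

theorem blockLength_mono : Monotone D.blockLength := fun a b hab =>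
  Nat.mul_le_mul_left _ (Nat.pow_le_pow_right (by have := D.N_pos; omega) (by omega))

theorem tendsto_N_mul_blockLength :
    Filter.Tendsto (fun k => D.N * D.blockLength k) Filter.atTop Filter.atTop := by
  refine Filter.tendsto_atTop_mono (fun k => ?_) Filter.tendsto_id
  have h2N : 1 < 2 * D.N := by have := D.N_pos; omega
  have hk : k - 1 < (2 * D.N) ^ (k - 1) := Nat.lt_pow_self h2N
  calc k ≤ 1 * (1 * (2 * D.N) ^ (k - 1)) := by omega
    _ ≤ D.N * D.blockLength k := Nat.mul_le_mul D.N_pos (Nat.mul_le_mul_right _ D.L_div_N_pos)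

variable {D}

theorem y_succ {k : ℕ} (hk : 1 ≤ k) (i : ZMod 3) (l : Fin D.N) :
    D.y (k + 1) i l = (List.ofFn fun j => D.y k i j ++ D.y k (i + 1) l).flatten := by
  obtain ⟨k, rfl⟩ : ∃ k', k = k' + 1 := ⟨k - 1, by omega⟩
  rfl

theorem length_y {k : ℕ} (hk : 1 ≤ k) (i : ZMod 3) (l : Fin D.N) :
    (D.y k i l).length = D.blockLength k := by
  induction k, hk using Nat.le_induction generalizing i l with
  | base => simp [Section4Data.y, D.hlen, blockLength]
  | succ k hk ih =>
    rw [y_succ hk, List.length_flatten, List.map_ofFn, List.sum_ofFn]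
    simp only [Function.comp_apply, List.length_append, ih, Finset.sum_const, Finset.card_univ,
      Fintype.card_fin, smul_eq_mul, blockLength, Nat.add_sub_cancel]
    rw [← Nat.sub_add_cancel hk, pow_succ, Nat.add_sub_cancel]
    ring

theorem y_infix_r (k : ℕ) (i : ZMod 3) (l : Fin D.N) : D.y k i l <:+: D.r k i :=
  List.infix_of_mem_flatten (List.mem_ofFn.2 ⟨l, rfl⟩)

theorem length_r {k : ℕ} (hk : 1 ≤ k) (i : ZMod 3) :
    (D.r k i).length = D.N * D.blockLength k := by
  simp [Section4Data.r, List.length_flatten, List.sum_ofFn, length_y hk]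

variable (D)

def blocks (k : ℕ) : Language (S × Bool) :=
  {w : Word S | ∃ i l, w = D.y k i l ∨ w = wInv (D.y k i l)}

variable {D}

theorem y_mem_blocks (k : ℕ) (i : ZMod 3) (l : Fin D.N) : D.y k i l ∈ D.blocks k :=
  ⟨i, l, Or.inl rfl⟩

theorem wInv_mem_blocks {k : ℕ} {c : Word S} (hc : c ∈ D.blocks k) : wInv c ∈ D.blocks k := by
  obtain ⟨i, l, rfl | rfl⟩ := hc
  exacts [⟨i, l, Or.inr rfl⟩, ⟨i, l, Or.inl (wInv_wInv _)⟩]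

theorem length_of_mem_blocks {k : ℕ} (hk : 1 ≤ k) {c : Word S} (hc : c ∈ D.blocks k) :
    c.length = D.blockLength k := by
  obtain ⟨i, l, rfl | rfl⟩ := hc <;> simp [length_y hk]

theorem y_mem_kstar_blocks {K k : ℕ} (hK : 1 ≤ K) (hKk : K ≤ k) (i : ZMod 3) (l : Fin D.N) :
    D.y k i l ∈ (D.blocks K)∗ := by
  induction k, hKk using Nat.le_induction generalizing i l with
  | base => exact (le_kstar : D.blocks K ≤ _) (y_mem_blocks K i l)
  | succ k hKk ih =>
    rw [y_succ (hK.trans hKk)]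
    refine Language.flatten_mem_kstar fun x hx => ?_
    obtain ⟨j, rfl⟩ := List.mem_ofFn.1 hx
    exact Language.append_mem_kstar (ih i j) (ih (i + 1) l)

theorem r_mem_kstar_blocks {K k : ℕ} (hK : 1 ≤ K) (hKk : K ≤ k) (i : ZMod 3) :
    D.r k i ∈ (D.blocks K)∗ :=
  Language.flatten_mem_kstar fun x hx => by
    obtain ⟨j, rfl⟩ := List.mem_ofFn.1 hx
    exact y_mem_kstar_blocks hK hKk i j

theorem blockLength_le_intersectionFn {K : ℕ} (hK : 1 ≤ K) {γ : ℕ → S × Bool} {c : Word S}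
    (hc : c ∈ D.blocks K) (hcγ : IsRaySubword γ c) :
    D.blockLength K ≤ intersectionFn D.R γ (D.N * D.blockLength K) := by
  calc D.blockLength K = c.length := (length_of_mem_blocks hK hc).symm
    _ ≤ _ := by
      obtain ⟨i, l, rfl | rfl⟩ := hc
      · exact le_intersectionFn ⟨D.r K i, ⟨K, hK, i, rfl⟩, 0, Or.inl (List.rotate_zero _).symm⟩
          (length_r hK i).le (y_infix_r K i l) hcγ
      · exact le_intersectionFn ⟨D.r K i, ⟨K, hK, i, rfl⟩, 0, Or.inr (List.rotate_zero _).symm⟩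
          (by rw [length_wInv, length_r hK i]) (wInv_infix (y_infix_r K i l)) hcγ

theorem intersectionFn_le_of_not_isRaySubword {K : ℕ} (hK : 1 ≤ K) {γ : ℕ → S × Bool}
    (hmiss : ∀ c ∈ D.blocks K, ¬IsRaySubword γ c) (t : ℕ) :
    intersectionFn D.R γ t ≤ D.N * D.blockLength K := by
  refine intersectionFn_le fun r hr _ w hwr hwγ => ?_
  obtain ⟨r₀, ⟨k, hk, i, rfl⟩, n, hrot⟩ := hr
  rcases le_or_gt k K with hkK | hKk
  · calc w.length ≤ r.length := hwr.length_le
      _ = D.N * D.blockLength k := by rcases hrot with rfl | rfl <;> simp [length_r hk]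
      _ ≤ D.N * D.blockLength K := Nat.mul_le_mul_left _ (D.blockLength_mono hkK)
  · by_contra! hlong
    obtain ⟨x, hx, hrx⟩ := exists_infix_mem_kstar_of_rotate (fun _ => wInv_mem_blocks)
      (r_mem_kstar_blocks hK hKk.le i) hrot
    have hlong₂ : 2 * D.blockLength K ≤ w.length :=
      (Nat.mul_le_mul_right _ (by have := D.hN; omega)).trans hlong.le
    obtain ⟨c, hc, hcw⟩ := Language.exists_mem_infix_of_infix_mem_kstar (D.blockLength_pos K)
      (fun c hc => (length_of_mem_blocks hK hc).le) hx (hwr.trans hrx) hlong₂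
    exact hmiss c hc (hwγ.of_infix hcw)

theorem exists_blocks_not_isRaySubword_of_sublinear {γ : ℕ → S × Bool}
    (hsub : Sublinear fun t => (intersectionFn D.R γ t : ℝ)) :
    ∃ K, 1 ≤ K ∧ ∀ c ∈ D.blocks K, ¬IsRaySubword γ c := by
  by_contra! hall
  have hN : (0 : ℝ) < D.N := by exact_mod_cast D.N_pos
  obtain ⟨K, hlt, hK⟩ := ((hsub.eventually_lt_mul D.tendsto_N_mul_blockLength
    (one_div_pos.2 hN)).and (Filter.eventually_ge_atTop 1)).exists
  obtain ⟨c, hc, hcγ⟩ := hall K hK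
  have hle : (D.blockLength K : ℝ) ≤ intersectionFn D.R γ (D.N * D.blockLength K) := by
    exact_mod_cast blockLength_le_intersectionFn hK hc hcγ
  rw [Nat.cast_mul, one_div, inv_mul_cancel_left₀ hN.ne'] at hlt
  exact hlt.not_ge hle

end Section4Data

end SmallCancel

theorem section4_morse_implies_strongly_contracting_general {S : Type}
    (D : Section4Data S) (γ : ℕ → S × Bool)
    (hsub : Sublinear fun t => (intersectionFn D.R γ t : ℝ)) :
    ∃ C : ℕ, ∀ t, intersectionFn D.R γ t ≤ C := by
  obtain ⟨K, hK, hmiss⟩ := D.exists_blocks_not_isRaySubword_of_sublinear hsub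
  exact ⟨_, D.intersectionFn_le_of_not_isRaySubword hK hmiss⟩

/-- Proposition 4.7 of the paper. Let `G = ⟨S|R⟩` be the group of
the Section-4 construction. Every geodesic ray in `G` whose intersection function is
sublinear has bounded intersection function. (By the criteria of
Arzhantseva–Cashen–Gruber–Hume, this says exactly that every Morse geodesic ray in
`Cay(G,S)` is strongly contracting, Theorem A(2).) -/
theorem section4_morse_implies_strongly_contracting {S : Type} [Finite S]
    (D : Section4Data S) (γ : ℕ → S × Bool)
    (hgeo : IsGeodesicRay D.R γ)
    (hsub : Sublinear fun t => (intersectionFn D.R γ t : ℝ)) :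
    ∃ C : ℕ, ∀ t, intersectionFn D.R γ t ≤ C :=
  section4_morse_implies_strongly_contracting_general D γ hsub
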